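/- arXiv:2012.07200 — 2 statements merged into one kernel-verified Lean document; each statement's English description precedes it below -/
import Mathlib

section
/- Let P be a finite poset on n elements and let φ be a linear functional on g_A(P); write c_{ij} = φ(E_{ij}) for each strict relation i ≺ j. Suppose the simple graph T on vertex set P whose edges are the pairs {i,j} with i ≺ j and c_{ij} ≠ 0 is a tree (connected and acyclic, spanning all of P). Then every L ∈ ker B_φ (i.e., every L ∈ g_A(P) with φ([x,L]) = 0 for all x ∈ g_A(P)) has vanishing (i,j) entry for every strict relation i ≺ j with c_{ij} ≠ 0. -/
/-!
Let `L` lie in the kernel of the Kirillov form and let `i ≺ j` be an edge of the tree of `φ`.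
For a diagonal trace-zero `D = diag(d)` one has `φ⁅D, L⁆ = ∑ (d_a - d_b) L_ab φ(E_ab)`, and only
edges of the tree contribute. Removing the edge `{i, j}` disconnects the tree; taking `d` to be the
indicator of the component of `i` (shifted to trace zero) kills every term except the one at
`(i, j)`, leaving `L_ij φ(E_ij) = 0`.
-/

open Matrix

attribute [local instance 100] LieRing.ofAssociativeRing

/-- A finite poset on `Fin n`, compatible with the natural order on `Fin n`. -/
structure FinPoset (n : ℕ) where
  le : Fin n → Fin n → Prop
  le_refl : ∀ i, le i i
  le_antisymm : ∀ i j, le i j → le j i → i = j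
  le_trans : ∀ i j k, le i j → le j k → le i k
  le_compat : ∀ i j, le i j → i ≤ j

namespace FinPoset

/-- Strict relation of the poset. -/
def lt {n : ℕ} (P : FinPoset n) (i j : Fin n) : Prop := P.le i j ∧ i ≠ j

end FinPoset

/-- The type-A Lie poset algebra: trace-zero matrices supported on the relations of `P`. -/
def gA {n : ℕ} (P : FinPoset n) : LieSubalgebra ℂ (Matrix (Fin n) (Fin n) ℂ) where
  carrier := {M | Matrix.trace M = 0 ∧ ∀ i j, ¬ P.le i j → M i j = 0}
  add_mem' := by
    rintro a b ⟨ha1, ha2⟩ ⟨hb1, hb2⟩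
    exact ⟨by simp [Matrix.trace_add, ha1, hb1],
      fun i j h => by simp [Matrix.add_apply, ha2 i j h, hb2 i j h]⟩
  zero_mem' := ⟨Matrix.trace_zero _ _, fun _ _ _ => rfl⟩
  smul_mem' := by
    rintro c a ⟨ha1, ha2⟩
    exact ⟨by simp [Matrix.trace_smul, ha1],
      fun i j h => by simp [Matrix.smul_apply, ha2 i j h]⟩
  lie_mem' := by
    rintro a b ⟨ha1, ha2⟩ ⟨hb1, hb2⟩
    refine ⟨by simp [Ring.lie_def, Matrix.trace_sub, Matrix.trace_mul_comm a b], ?_⟩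
    intro i j h
    simp only [Ring.lie_def, Matrix.sub_apply, Matrix.mul_apply]
    rw [Finset.sum_eq_zero, Finset.sum_eq_zero, sub_zero]
    · intro k _
      by_cases hbk : P.le i k
      · have : ¬ P.le k j := fun hkj => h (P.le_trans i k j hbk hkj)
        simp [ha2 k j this]
      · simp [hb2 i k hbk]
    · intro k _
      by_cases hak : P.le i k
      · have : ¬ P.le k j := fun hkj => h (P.le_trans i k j hak hkj)
        simp [hb2 k j this]
      · simp [ha2 i k hak]

/-- The extended skew-symmetric matrix `\widehat{B}_φ` attached to an ordered
basis-like family `E` and a functional `φ`. -/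
def hatB {g : Type*} [LieRing g] [LieAlgebra ℂ g] {m : ℕ}
    (E : Fin m → g) (φ : Module.Dual ℂ g) : Matrix (Fin (m + 1)) (Fin (m + 1)) ℂ :=
  Matrix.of fun i j =>
    Fin.cases
      (Fin.cases 0 (fun j' => φ (E j')) j)
      (fun i' => Fin.cases (-(φ (E i'))) (fun j' => φ ⁅E i', E j'⁆) j)
      i

/-- `φ` is a contact form on `g`: `g` has odd dimension `2k+1` and the matrix
`\widehat{B}_φ` with respect to a basis is nonsingular. -/
def IsContactForm (g : Type*) [LieRing g] [LieAlgebra ℂ g] (φ : Module.Dual ℂ g) : Prop :=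
  ∃ (k : ℕ) (E : Module.Basis (Fin (2 * k + 1)) ℂ g), (hatB (⇑E) φ).det ≠ 0

/-- `g` is a contact Lie algebra. -/
def IsContact (g : Type*) [LieRing g] [LieAlgebra ℂ g] : Prop :=
  ∃ φ : Module.Dual ℂ g, IsContactForm g φ

/-- The kernel of the Kirillov form `B_φ(x,y) = φ⁅x,y⁆`. -/
def kerB {g : Type*} [LieRing g] [LieAlgebra ℂ g] (φ : Module.Dual ℂ g) : Submodule ℂ g where
  carrier := {x | ∀ y, φ ⁅x, y⁆ = 0}
  add_mem' := by intro a b ha hb; intro y; simp [add_lie, ha y, hb y]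
  zero_mem' := by intro y; simp
  smul_mem' := by intro c x hx; intro y; simp [smul_lie, hx y]

/-- The index of a Lie algebra: the minimal dimension of `ker B_φ`. -/
noncomputable def lieIndex (g : Type*) [LieRing g] [LieAlgebra ℂ g] : ℕ :=
  sInf {d | ∃ φ : Module.Dual ℂ g, Module.finrank ℂ (kerB φ) = d}

/-- The Hasse diagram of `P` as a simple graph on `Fin n`. -/
def hasse {n : ℕ} (P : FinPoset n) : SimpleGraph (Fin n) :=
  SimpleGraph.fromRel (fun i j => P.lt i j ∧ ∀ k, ¬ (P.lt i k ∧ P.lt k j))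

/-- The Hasse diagram of the subposet of `P` induced on `S`. -/
def hasseOn {n : ℕ} (P : FinPoset n) (S : Set (Fin n)) : SimpleGraph S :=
  SimpleGraph.fromRel (fun i j => P.lt i j ∧ ∀ k : S, ¬ (P.lt i k ∧ P.lt k j))

/-- The set of extremal (minimal or maximal) elements of `P`. -/
def extSet {n : ℕ} (P : FinPoset n) : Set (Fin n) :=
  {i | (∀ j, ¬ P.lt j i) ∨ (∀ j, ¬ P.lt i j)}

/-- The extremal elements of the subposet of `P` induced on `S`. -/
def extIn {n : ℕ} (P : FinPoset n) (S : Set (Fin n)) : Set (Fin n) :=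
  {i | i ∈ S ∧ ((∀ j ∈ S, ¬ P.lt j i) ∨ (∀ j ∈ S, ¬ P.lt i j))}

/-- The set of elements comparable to `i` (underlying set of `P^i`). -/
def cone {n : ℕ} (P : FinPoset n) (i : Fin n) : Set (Fin n) :=
  {j | P.le j i ∨ P.le i j}

/-- `D(P,i)`: the number of elements strictly below `i`. -/
noncomputable def downDeg {n : ℕ} (P : FinPoset n) (i : Fin n) : ℕ :=
  Set.ncard {j | P.lt j i}

/-- `U(P,i)`: the number of elements strictly above `i`. -/
noncomputable def upDeg {n : ℕ} (P : FinPoset n) (i : Fin n) : ℕ :=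
  Set.ncard {j | P.lt i j}

/-- `P` has a chain of cardinality `m`. -/
def hasChain {n : ℕ} (P : FinPoset n) (m : ℕ) : Prop :=
  ∃ s : Finset (Fin n), s.card = m ∧ ∀ i ∈ s, ∀ j ∈ s, P.le i j ∨ P.le j i

/-- `P` has height exactly `h`: it has a chain of cardinality `h+1` but none of
cardinality `h+2`. -/
def heightEq {n : ℕ} (P : FinPoset n) (h : ℕ) : Prop :=
  hasChain P (h + 1) ∧ ¬ hasChain P (h + 2)

/-- The matrix unit `E_{ij}` belongs to `g_A(P)` whenever `i ≺ j`. -/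
theorem stdBasisMatrix_mem_gA {n : ℕ} (P : FinPoset n) {i j : Fin n} (h : P.lt i j) :
    Matrix.single i j 1 ∈ gA P := by
  constructor
  · exact Matrix.trace_single_eq_of_ne i j (1 : ℂ) h.2
  · intro a b hab
    by_cases hia : i = a
    · by_cases hjb : j = b
      · exact absurd (hia ▸ hjb ▸ h.1) hab
      · simp [Matrix.single, hjb]
    · simp [Matrix.single, hia]

namespace FinPoset

variable {n : ℕ} (P : FinPoset n)

theorem lt_asymm {i j : Fin n} (hij : P.lt i j) : ¬ P.lt j i :=
  fun hji => hij.2 (P.le_antisymm i j hij.1 hji.1)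

end FinPoset

namespace gA

variable {n : ℕ} (P : FinPoset n)

/-- The matrix unit `E_{ab}` as an element of `g_A(P)`, with the junk value `0` unless `a ≺ b`. -/
noncomputable def single (a b : Fin n) : gA P :=
  open Classical in if h : P.lt a b then ⟨Matrix.single a b 1, stdBasisMatrix_mem_gA P h⟩ else 0

variable {P}

theorem single_of_lt {a b : Fin n} (h : P.lt a b) :
    single P a b = ⟨Matrix.single a b 1, stdBasisMatrix_mem_gA P h⟩ := by
  rw [single, dif_pos h]

theorem single_of_not_lt {a b : Fin n} (h : ¬ P.lt a b) : single P a b = 0 := by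
  rw [single, dif_neg h]

theorem lt_of_apply_single_ne_zero {M : Type*} [AddCommGroup M] [Module ℂ M]
    {φ : gA P →ₗ[ℂ] M} {a b : Fin n} (h : φ (single P a b) ≠ 0) : P.lt a b := by
  by_contra hab
  exact h (by rw [single_of_not_lt hab, map_zero])

theorem exists_lt_apply_ne_zero_iff {φ : Module.Dual ℂ (gA P)} {a b : Fin n} :
    (∃ h : P.lt a b, φ ⟨Matrix.single a b 1, stdBasisMatrix_mem_gA P h⟩ ≠ 0) ↔
      φ (single P a b) ≠ 0 := by
  refine ⟨fun ⟨h, hne⟩ => by rwa [single_of_lt h], fun hne => ?_⟩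
  have h := lt_of_apply_single_ne_zero hne
  exact ⟨h, by rwa [← single_of_lt h]⟩

theorem smul_coe_single (M : gA P) (a b : Fin n) (hM : (M : Matrix (Fin n) (Fin n) ℂ) a a = 0) :
    (M : Matrix (Fin n) (Fin n) ℂ) a b • (single P a b : Matrix (Fin n) (Fin n) ℂ) =
      Matrix.single a b ((M : Matrix (Fin n) (Fin n) ℂ) a b) := by
  by_cases hab : P.lt a b
  · rw [single_of_lt hab, Matrix.smul_single, smul_eq_mul, mul_one]
  · rw [single_of_not_lt hab, ZeroMemClass.coe_zero, smul_zero]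
    by_cases h : a = b
    · subst h; rw [hM, Matrix.single_zero]
    · rw [M.2.2 a b (fun hle => hab ⟨hle, h⟩), Matrix.single_zero]

theorem eq_sum_smul_single {M : gA P} (hM : ∀ a, (M : Matrix (Fin n) (Fin n) ℂ) a a = 0) :
    M = ∑ a, ∑ b, (M : Matrix (Fin n) (Fin n) ℂ) a b • single P a b := by
  apply Subtype.ext
  simp only [AddSubmonoidClass.coe_finsetSum, SetLike.val_smul, smul_coe_single M _ _ (hM _)]
  exact Matrix.matrix_eq_sum_single _

theorem diagonal_mem {d : Fin n → ℂ} (hd : ∑ a, d a = 0) : Matrix.diagonal d ∈ gA P :=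
  ⟨by rwa [Matrix.trace_diagonal],
    fun a b hab => Matrix.diagonal_apply_ne _ fun h => hab (h ▸ P.le_refl a)⟩

def graph (φ : Module.Dual ℂ (gA P)) : SimpleGraph (Fin n) :=
  SimpleGraph.fromRel fun a b => φ (single P a b) ≠ 0

theorem graph_adj_of_apply_ne_zero {φ : Module.Dual ℂ (gA P)} {a b : Fin n}
    (h : φ (single P a b) ≠ 0) : (graph φ).Adj a b :=
  (SimpleGraph.fromRel_adj _ a b).mpr ⟨(lt_of_apply_single_ne_zero h).2, Or.inl h⟩

end gA

theorem Matrix.lie_diagonal_apply {n R : Type*} [Fintype n] [DecidableEq n] [CommRing R]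
    (d : n → R) (M : Matrix n n R) (a b : n) :
    ⁅Matrix.diagonal d, M⁆ a b = (d a - d b) * M a b := by
  rw [Ring.lie_def, Matrix.sub_apply, Matrix.diagonal_mul, Matrix.mul_diagonal]
  ring

section Kirillov

variable {n : ℕ} {P : FinPoset n} {φ : Module.Dual ℂ (gA P)} {L : gA P}

theorem apply_lie_diagonal_eq_sum {d : Fin n → ℂ} (hd : ∑ a, d a = 0) :
    φ ⁅(⟨Matrix.diagonal d, gA.diagonal_mem hd⟩ : gA P), L⁆ =
      ∑ a, ∑ b, (d a - d b) * (L : Matrix (Fin n) (Fin n) ℂ) a b * φ (gA.single P a b) := by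
  have hlie : ∀ a b, ((⁅(⟨Matrix.diagonal d, gA.diagonal_mem hd⟩ : gA P), L⁆ : gA P) :
      Matrix (Fin n) (Fin n) ℂ) a b = (d a - d b) * (L : Matrix (Fin n) (Fin n) ℂ) a b :=
    Matrix.lie_diagonal_apply d L
  rw [gA.eq_sum_smul_single (M := ⁅_, L⁆) fun a => by rw [hlie, sub_self, zero_mul]]
  simp only [map_sum, map_smul, smul_eq_mul, hlie]

/-- Testing `L ∈ ker B_φ` against the trace-zero diagonal matrix `diag(f) - mean(f)`. -/
theorem sum_sub_mul_apply_mul_eq_zero (hL : ∀ x : gA P, φ ⁅x, L⁆ = 0) (f : Fin n → ℂ) :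
    ∑ a, ∑ b, (f a - f b) * (L : Matrix (Fin n) (Fin n) ℂ) a b * φ (gA.single P a b) = 0 := by
  rcases n.eq_zero_or_pos with rfl | hn
  · simp
  set d : Fin n → ℂ := fun a => f a - (∑ b, f b) / n
  have hd : ∑ a, d a = 0 := by
    simp only [d, Finset.sum_sub_distrib, Finset.sum_const, Finset.card_univ, Fintype.card_fin,
      nsmul_eq_mul]
    rw [mul_div_cancel₀ _ (by exact_mod_cast hn.ne'), sub_self]
  have hdf : ∀ a b, d a - d b = f a - f b := fun a b => by ring
  simpa only [apply_lie_diagonal_eq_sum hd, hdf] using hL ⟨Matrix.diagonal d, gA.diagonal_mem hd⟩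

end Kirillov

theorem SimpleGraph.reachable_deleteEdges_iff_of_adj {V : Type*} {G : SimpleGraph V}
    {u v a b : V} (hab : G.Adj a b) (hne : s(a, b) ≠ s(u, v)) (w : V) :
    (G.deleteEdges {s(u, v)}).Reachable w a ↔ (G.deleteEdges {s(u, v)}).Reachable w b := by
  have hab' : (G.deleteEdges {s(u, v)}).Adj a b := by
    rw [SimpleGraph.deleteEdges_adj]
    exact ⟨hab, hne⟩
  exact ⟨fun h => h.trans hab'.reachable, fun h => h.trans hab'.symm.reachable⟩

/-- The indicator of the side of the bridge containing `i` makes every other term of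
`sum_sub_mul_apply_mul_eq_zero` vanish. -/
theorem apply_eq_zero_of_isBridge {n : ℕ} {P : FinPoset n} {φ : Module.Dual ℂ (gA P)}
    {L : gA P} (hL : ∀ x : gA P, φ ⁅x, L⁆ = 0) {i j : Fin n} (hc : φ (gA.single P i j) ≠ 0)
    (hbridge : (gA.graph φ).IsBridge s(i, j)) :
    (L : Matrix (Fin n) (Fin n) ℂ) i j = 0 := by
  classical
  set f : Fin n → ℂ := fun v => if ((gA.graph φ).deleteEdges {s(i, j)}).Reachable i v then 1 else 0
  have hij := gA.lt_of_apply_single_ne_zero hc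
  have hf : ∀ a b, (a, b) ≠ (i, j) →
      (f a - f b) * (L : Matrix (Fin n) (Fin n) ℂ) a b * φ (gA.single P a b) = 0 := by
    intro a b hne
    by_cases hab : φ (gA.single P a b) = 0
    · rw [hab, mul_zero]
    have hedge : s(a, b) ≠ s(i, j) := by
      rintro h
      rcases Sym2.eq_iff.mp h with ⟨rfl, rfl⟩ | ⟨rfl, rfl⟩
      · exact hne rfl
      · exact P.lt_asymm hij (gA.lt_of_apply_single_ne_zero hab)
    have hside := SimpleGraph.reachable_deleteEdges_iff_of_adj
      (gA.graph_adj_of_apply_ne_zero hab) hedge i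
    simp only [f, hside, sub_self, zero_mul]
  have key := sum_sub_mul_apply_mul_eq_zero hL f
  rw [← Fintype.sum_prod_type', Fintype.sum_eq_single (i, j) fun p hp => hf p.1 p.2 hp] at key
  have hfi : f i = 1 := if_pos (SimpleGraph.Reachable.refl i)
  have hfj : f j = 0 := if_neg hbridge
  rw [hfi, hfj, sub_zero, one_mul] at key
  exact (mul_eq_zero.mp key).resolve_right hc

/-- if the directed graph of the functional `φ` (edges: strict relations
`i ≺ j` with `φ(E_{ij}) ≠ 0`) is a spanning tree, then every `L ∈ ker B_φ` has vanishing
`(i,j)` entry for every strict relation `i ≺ j` with `φ(E_{ij}) ≠ 0`. -/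
theorem stmt13 {n : ℕ} (P : FinPoset n) (φ : Module.Dual ℂ ↥(gA P))
    (hT : (SimpleGraph.fromRel (fun i j => ∃ h : P.lt i j,
        φ ⟨Matrix.single i j 1, stdBasisMatrix_mem_gA P h⟩ ≠ 0)).IsTree) :
    ∀ L : ↥(gA P), (∀ x : ↥(gA P), φ ⁅x, L⁆ = 0) →
      ∀ i j : Fin n, ∀ h : P.lt i j,
        φ ⟨Matrix.single i j 1, stdBasisMatrix_mem_gA P h⟩ ≠ 0 →
        (L : Matrix (Fin n) (Fin n) ℂ) i j = 0 := by
  intro L hL i j hij hc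
  have htree : (gA.graph φ).IsTree := by
    simpa only [gA.graph, gA.exists_lt_apply_ne_zero_iff] using hT
  rw [← gA.single_of_lt hij] at hc
  have hbridge : (gA.graph φ).IsBridge s(i, j) :=
    SimpleGraph.isAcyclic_iff_forall_adj_isBridge.mp htree.isAcyclic
      (gA.graph_adj_of_apply_ne_zero hc)
  exact apply_eq_zero_of_isBridge hL hc hbridge
end

section
/- Let g be a complex Lie algebra of odd dimension 2k+1 and let φ ∈ g* be a contact form on g, i.e., det(\widehat{B}_φ) ≠ 0 with respect to some ordered basis of g. Then dim ker B_φ = 1; in particular, ind g = 1. -/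
open Matrix

attribute [local instance 100] LieRing.ofAssociativeRing

/-!
The Kirillov matrix `(ψ ⁅E i, E j⁆)` is skew-symmetric of odd size, hence singular, so
`ker B_ψ ≠ 0` for every `ψ`. Conversely, if `x ∈ ker B_φ` and `φ x = 0`, then the coordinate
vector of `x` bordered by a leading `0` lies in the kernel of `\widehat{B}_φ`; so when
`det \widehat{B}_φ ≠ 0`, `φ` is injective on `ker B_φ`, which therefore has dimension at most one.
-/

theorem Matrix.det_eq_zero_of_transpose_eq_neg {n R : Type*} [Fintype n] [DecidableEq n]
    [CommRing R] [NoZeroDivisors R] [CharZero R] {A : Matrix n n R} (hA : Aᵀ = -A)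
    (hn : Odd (Fintype.card n)) : A.det = 0 := by
  have h := A.det_transpose
  rw [hA, det_neg, hn.neg_one_pow, neg_one_mul, neg_eq_iff_add_eq_zero] at h
  exact add_self_eq_zero.mp h

section Kirillov

variable {g ι : Type*} [LieRing g] [LieAlgebra ℂ g]

def kirillovMatrix (E : ι → g) (φ : Module.Dual ℂ g) : Matrix ι ι ℂ :=
  Matrix.of fun i j => φ ⁅E i, E j⁆

theorem kirillovMatrix_transpose (E : ι → g) (φ : Module.Dual ℂ g) :
    (kirillovMatrix E φ)ᵀ = -kirillovMatrix E φ := by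
  ext i j
  rw [transpose_apply, neg_apply, kirillovMatrix, of_apply, of_apply, ← lie_skew, map_neg]

theorem apply_eq_sum_equivFun [Fintype ι] (E : Module.Basis ι ℂ g)
    (f : g →ₗ[ℂ] ℂ) (x : g) : f x = ∑ j, f (E j) * E.equivFun x j := by
  conv_lhs => rw [← E.sum_equivFun x]
  simp only [map_sum, map_smul, smul_eq_mul, mul_comm]

theorem kirillovMatrix_mulVec_equivFun [Fintype ι] (E : Module.Basis ι ℂ g)
    (φ : Module.Dual ℂ g) (x : g) :
    kirillovMatrix E φ *ᵥ E.equivFun x = fun i => φ ⁅E i, x⁆ := by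
  ext i
  exact (apply_eq_sum_equivFun E (φ ∘ₗ LieAlgebra.ad ℂ g (E i)) x).symm

theorem mem_kerB_iff_forall_basis (E : Module.Basis ι ℂ g)
    (φ : Module.Dual ℂ g) (x : g) : x ∈ kerB φ ↔ ∀ i, φ ⁅x, E i⁆ = 0 := by
  refine ⟨fun hx i => hx (E i), fun hx => ?_⟩
  have : φ ∘ₗ LieAlgebra.ad ℂ g x = 0 := E.ext fun i => hx i
  exact fun y => LinearMap.congr_fun this y

theorem mem_kerB_iff_kirillovMatrix_mulVec [Fintype ι]
    (E : Module.Basis ι ℂ g) (φ : Module.Dual ℂ g) (x : g) :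
    x ∈ kerB φ ↔ kirillovMatrix E φ *ᵥ E.equivFun x = 0 := by
  rw [mem_kerB_iff_forall_basis E, kirillovMatrix_mulVec_equivFun, funext_iff]
  simp only [← lie_skew x, map_neg, neg_eq_zero, Pi.zero_apply]

theorem kerB_ne_bot {k : ℕ} (E : Module.Basis (Fin (2 * k + 1)) ℂ g) (φ : Module.Dual ℂ g) :
    kerB φ ≠ ⊥ := by
  have hdet : (kirillovMatrix E φ).det = 0 :=
    det_eq_zero_of_transpose_eq_neg (kirillovMatrix_transpose E φ) (by simp)
  obtain ⟨v, hv, hMv⟩ := exists_mulVec_eq_zero_iff.mpr hdet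
  rw [Submodule.ne_bot_iff]
  refine ⟨E.equivFun.symm v, ?_, E.equivFun.symm.map_ne_zero_iff.mpr hv⟩
  rw [mem_kerB_iff_kirillovMatrix_mulVec E, LinearEquiv.apply_symm_apply, hMv]

theorem one_le_finrank_kerB {k : ℕ} (E : Module.Basis (Fin (2 * k + 1)) ℂ g)
    (φ : Module.Dual ℂ g) : 1 ≤ Module.finrank ℂ (kerB φ) := by
  have := Module.Finite.of_basis E
  exact Submodule.one_le_finrank_iff.mpr (kerB_ne_bot E φ)

theorem hatB_mulVec_vecCons_zero {m : ℕ} (E : Fin m → g) (φ : Module.Dual ℂ g)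
    (c : Fin m → ℂ) :
    hatB E φ *ᵥ vecCons 0 c = vecCons (∑ j, φ (E j) * c j) (kirillovMatrix E φ *ᵥ c) := by
  ext i
  refine Fin.cases ?_ (fun i => ?_) i <;>
    simp [hatB, kirillovMatrix, mulVec, dotProduct, Fin.sum_univ_succ]

theorem eq_zero_of_mem_kerB_of_apply_eq_zero {m : ℕ} (E : Module.Basis (Fin m) ℂ g)
    {φ : Module.Dual ℂ g} (h : (hatB (⇑E) φ).det ≠ 0) {x : g} (hx : x ∈ kerB φ)
    (hφx : φ x = 0) : x = 0 := by
  have hker : hatB (⇑E) φ *ᵥ vecCons 0 (E.equivFun x) = 0 := by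
    rw [hatB_mulVec_vecCons_zero, ← apply_eq_sum_equivFun, hφx,
      (mem_kerB_iff_kirillovMatrix_mulVec E φ x).mp hx, cons_zero_zero]
  by_contra hx0
  refine h (exists_mulVec_eq_zero_iff.mp ⟨_, ?_, hker⟩)
  simpa [cons_eq_zero_iff] using hx0

theorem finrank_kerB_le_one {m : ℕ} (E : Module.Basis (Fin m) ℂ g)
    {φ : Module.Dual ℂ g} (h : (hatB (⇑E) φ).det ≠ 0) : Module.finrank ℂ (kerB φ) ≤ 1 := by
  have := Module.Finite.of_basis E
  have hinj : Function.Injective (φ ∘ₗ (kerB φ).subtype) := by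
    rw [← LinearMap.ker_eq_bot, LinearMap.ker_eq_bot']
    exact fun x hx => Subtype.ext (eq_zero_of_mem_kerB_of_apply_eq_zero E h x.2 hx)
  simpa using LinearMap.finrank_le_finrank_of_injective hinj

theorem lieIndex_eq_of_finrank_kerB_eq {φ : Module.Dual ℂ g} {d : ℕ}
    (hφ : Module.finrank ℂ (kerB φ) = d)
    (hmin : ∀ ψ : Module.Dual ℂ g, d ≤ Module.finrank ℂ (kerB ψ)) : lieIndex g = d := by
  refine le_antisymm (Nat.sInf_le ⟨φ, hφ⟩) ?_
  obtain ⟨ψ, hψ⟩ := Nat.sInf_mem (⟨d, φ, hφ⟩ : {d | ∃ ψ : Module.Dual ℂ g,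
    Module.finrank ℂ (kerB ψ) = d}.Nonempty)
  exact (hmin ψ).trans_eq hψ

end Kirillov

/-- a contact form is regular: if `det \widehat{B}_φ ≠ 0` with respect to
some basis, then `dim ker B_φ = 1` and `ind g = 1`. -/
theorem stmt14 (g : Type) [LieRing g] [LieAlgebra ℂ g]
    (k : ℕ) (E : Module.Basis (Fin (2 * k + 1)) ℂ g) (φ : Module.Dual ℂ g)
    (h : (hatB (⇑E) φ).det ≠ 0) :
    Module.finrank ℂ (kerB φ) = 1 ∧ lieIndex g = 1 := by
  have hφ : Module.finrank ℂ (kerB φ) = 1 :=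
    le_antisymm (finrank_kerB_le_one E h) (one_le_finrank_kerB E φ)
  exact ⟨hφ, lieIndex_eq_of_finrank_kerB_eq hφ (one_le_finrank_kerB E)⟩
end
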